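/- Let π : C → D be a morphism of k-coalgebras and (B, θ_B) a left D-contramodule. Define linear maps f, g : Hom_k(D ⊗ C, B) → Hom_k(C, B) by f(ψ)(c) = ψ(π(c₍₁₎) ⊗ c₍₂₎) and g(ψ)(c) = θ_B(d ↦ ψ(d ⊗ c)), and let K = range(f − g) ⊆ Hom_k(C,B). Then K is a subcontramodule of the free C-contramodule (Hom_k(C,B), θ_free): for every linear Φ : C → Hom_k(C,B) whose range is contained in K, one has θ_free(Φ) ∈ K. Consequently the quotient Ind_D^C(B) := Hom_k(C,B)/K carries a well-defined induced C-contra-action. -/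

import Mathlib

/-!
Under `Hom(D ⊗ C, B) ≃ Hom(C, Hom(D, B))` the space `Hom(D ⊗ C, B)` carries the free
`C`-contramodule structure `Φ ↦ (d ⊗ c ↦ Φ(c₍₂₎)(d ⊗ c₍₁₎))`, and both `f` and `g` intertwine it
with `θ_free`: for `f` this is coassociativity of `C`, for `g` the linearity of `θ_B`. Over a field
every linear map `C → range(f − g)` lifts through `f − g`, so `θ_free` of it is the image under
`f − g` of the action on the lift. The action on the quotient is `θ_free` of any lift along a
linear section of `Hom(C, B) → Hom(C, B) ⧸ K`.
-/

open TensorProduct LinearMap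

noncomputable section

variable (k : Type*) [Field k]
variable (C : Type*) [AddCommGroup C] [Module k C] [Coalgebra k C]
variable (D : Type*) [AddCommGroup D] [Module k D] [Coalgebra k D]
variable (B : Type*) [AddCommGroup B] [Module k B]

def IsContramodule {B' : Type*} [AddCommGroup B'] [Module k B']
    (θ : (D →ₗ[k] B') →ₗ[k] B') : Prop :=
  (∀ Φ : D →ₗ[k] (D →ₗ[k] B'),
      θ (θ ∘ₗ Φ) = θ ((TensorProduct.lift Φ.flip) ∘ₗ Coalgebra.comul)) ∧
  (∀ b : B', θ ((LinearMap.toSpanSingleton k B' b) ∘ₗ Coalgebra.counit) = b)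

/-- A subspace `N` is a subcontramodule of `(B', θ)` if `θ(φ) ∈ N` whenever `range φ ⊆ N`. -/
def IsSubContra {B' : Type*} [AddCommGroup B'] [Module k B']
    (θ : (C →ₗ[k] B') →ₗ[k] B') (N : Submodule k B') : Prop :=
  ∀ φ : C →ₗ[k] B', LinearMap.range φ ≤ N → θ φ ∈ N

/-- The free contra-action on `Hom_k(C,V)`: `θ_free(Φ)(c) = Φ(c₍₂₎)(c₍₁₎)`. -/
def freeContra (V : Type*) [AddCommGroup V] [Module k V] :
    (C →ₗ[k] (C →ₗ[k] V)) →ₗ[k] (C →ₗ[k] V) :=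
  (LinearMap.lcomp k V (Coalgebra.comul (R := k) (A := C))) ∘ₗ
    (TensorProduct.uncurry (RingHom.id k) C C V) ∘ₗ (LinearMap.lflip.toLinearMap)

/-- `f(ψ)(c) = ψ(π(c₍₁₎) ⊗ c₍₂₎)`. -/
def fInd (π : C →ₗ[k] D) : ((D ⊗[k] C) →ₗ[k] B) →ₗ[k] (C →ₗ[k] B) :=
  LinearMap.lcomp k B
    ((TensorProduct.map π LinearMap.id) ∘ₗ (Coalgebra.comul (R := k) (A := C)))

/-- `g(ψ)(c) = θ_B(d ↦ ψ(d ⊗ c))`. -/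
def gInd (θB : (D →ₗ[k] B) →ₗ[k] B) : ((D ⊗[k] C) →ₗ[k] B) →ₗ[k] (C →ₗ[k] B) :=
  (LinearMap.llcomp k C (D →ₗ[k] B) B θB) ∘ₗ (LinearMap.lflip.toLinearMap) ∘ₗ
    (TensorProduct.lcurry (RingHom.id k) D C B)

section ContraAction

variable {k}
variable {X : Type*} [AddCommGroup X] [Module k X]

theorem IsSubContra.range_of_intertwines {P M : Type*} [AddCommGroup P] [Module k P]
    [AddCommGroup M] [Module k M] (F : P →ₗ[k] M) (θM : (X →ₗ[k] M) →ₗ[k] M)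
    (θP : (X →ₗ[k] P) → P) (hF : ∀ Φ : X →ₗ[k] P, θM (F ∘ₗ Φ) = F (θP Φ)) :
    IsSubContra k X θM (range F) := by
  intro φ hφ
  obtain ⟨Φ, hΦ⟩ := Module.projective_lifting_property F.rangeRestrict
    (φ.codRestrict (range F) fun x => hφ ⟨x, rfl⟩) F.surjective_rangeRestrict
  have hFΦ : F ∘ₗ Φ = φ := LinearMap.ext fun x => congrArg Subtype.val (LinearMap.congr_fun hΦ x)
  rw [← hFΦ, hF]
  exact mem_range_self F (θP Φ)

theorem IsSubContra.exists_quotient_action {M : Type*} [AddCommGroup M] [Module k M]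
    {θ : (X →ₗ[k] M) →ₗ[k] M} {N : Submodule k M} (hN : IsSubContra k X θ N) :
    ∃ θq : (X →ₗ[k] M ⧸ N) →ₗ[k] M ⧸ N, ∀ Φ : X →ₗ[k] M, θq (N.mkQ ∘ₗ Φ) = N.mkQ (θ Φ) := by
  obtain ⟨s, hs⟩ := N.mkQ.exists_rightInverse_of_surjective N.range_mkQ
  refine ⟨N.mkQ ∘ₗ θ ∘ₗ llcomp k X (M ⧸ N) M s, fun Φ => ?_⟩
  have hlift : range (s ∘ₗ N.mkQ ∘ₗ Φ - Φ) ≤ N := by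
    rintro _ ⟨x, rfl⟩
    rw [← Submodule.Quotient.mk_eq_zero, ← Submodule.mkQ_apply, LinearMap.sub_apply, map_sub,
      sub_eq_zero]
    exact LinearMap.congr_fun hs (N.mkQ (Φ x))
  show N.mkQ (θ (s ∘ₗ N.mkQ ∘ₗ Φ)) = N.mkQ (θ Φ)
  rw [Submodule.mkQ_apply, Submodule.mkQ_apply, Submodule.Quotient.eq, ← map_sub]
  exact hN _ hlift

end ContraAction

section Induction

variable {k C}
variable {E V : Type*} [AddCommGroup E] [Module k E] [AddCommGroup V] [Module k V]

theorem freeContra_apply (Φ : C →ₗ[k] C →ₗ[k] V) (c : C) :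
    freeContra k C V Φ c = lift Φ.flip (Coalgebra.comul c) :=
  rfl

/-- `θ(Φ)(e ⊗ c) = Φ(c₍₂₎)(e ⊗ c₍₁₎)`: the free contra-action on `Hom(C, Hom(E, V))`, read
through `Hom(E ⊗ C, V) ≃ Hom(C, Hom(E, V))`. -/
def freeContraTensor (Φ : C →ₗ[k] E ⊗[k] C →ₗ[k] V) : E ⊗[k] C →ₗ[k] V :=
  lift Φ.flip ∘ₗ (TensorProduct.assoc k E C C).symm.toLinearMap ∘ₗ
    (Coalgebra.comul (R := k) (A := C)).lTensor E

theorem freeContra_fInd_comp (π : C →ₗ[k] E) (Φ : C →ₗ[k] E ⊗[k] C →ₗ[k] V) :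
    freeContra k C V (fInd k C E V π ∘ₗ Φ) = fInd k C E V π (freeContraTensor Φ) := by
  have hlift : lift (fInd k C E V π ∘ₗ Φ).flip =
      lift Φ.flip ∘ₗ map (map π id) id ∘ₗ (Coalgebra.comul (R := k) (A := C)).rTensor C :=
    TensorProduct.ext' fun _ _ => rfl
  have hassoc : (TensorProduct.assoc k E C C).symm.toLinearMap ∘ₗ
      (Coalgebra.comul (R := k) (A := C)).lTensor E ∘ₗ map π id =
      map (map π id) id ∘ₗ (TensorProduct.assoc k C C C).symm.toLinearMap ∘ₗ
        (Coalgebra.comul (R := k) (A := C)).lTensor C :=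
    TensorProduct.ext' fun x y => by simp [map_map_assoc_symm]
  ext c
  calc freeContra k C V (fInd k C E V π ∘ₗ Φ) c
      = lift Φ.flip (map (map π id) id
          ((Coalgebra.comul (R := k) (A := C)).rTensor C (Coalgebra.comul c))) := by
        rw [freeContra_apply, hlift]; rfl
    _ = lift Φ.flip (map (map π id) id ((TensorProduct.assoc k C C C).symm
          ((Coalgebra.comul (R := k) (A := C)).lTensor C (Coalgebra.comul c)))) := by
        rw [Coalgebra.coassoc_symm_apply]
    _ = fInd k C E V π (freeContraTensor Φ) c :=
        congr_arg (lift Φ.flip) (LinearMap.congr_fun hassoc (Coalgebra.comul c)).symm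

theorem freeContra_gInd_comp (θ : (E →ₗ[k] V) →ₗ[k] V) (Φ : C →ₗ[k] E ⊗[k] C →ₗ[k] V) :
    freeContra k C V (gInd k C E V θ ∘ₗ Φ) = gInd k C E V θ (freeContraTensor Φ) := by
  have hlift : lift (gInd k C E V θ ∘ₗ Φ).flip = θ ∘ₗ
      (lcurry (RingHom.id k) E (C ⊗[k] C) V
        (lift Φ.flip ∘ₗ (TensorProduct.assoc k E C C).symm.toLinearMap)).flip :=
    TensorProduct.ext' fun _ _ => rfl
  ext c
  rw [freeContra_apply, hlift]
  rfl

end Induction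

theorem induction_kernel_isSubContra
    (π : C →ₗ[k] D)
    (θB : (D →ₗ[k] B) →ₗ[k] B) :
    IsSubContra k C (freeContra k C B)
      (LinearMap.range (fInd k C D B π - gInd k C D B θB)) ∧
    ∃ θq : (C →ₗ[k] ((C →ₗ[k] B) ⧸
              LinearMap.range (fInd k C D B π - gInd k C D B θB))) →ₗ[k]
            ((C →ₗ[k] B) ⧸ LinearMap.range (fInd k C D B π - gInd k C D B θB)),
      ∀ Φ : C →ₗ[k] (C →ₗ[k] B),
        θq ((LinearMap.range (fInd k C D B π - gInd k C D B θB)).mkQ ∘ₗ Φ)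
          = (LinearMap.range (fInd k C D B π - gInd k C D B θB)).mkQ
              (freeContra k C B Φ) := by
  have hsub : IsSubContra k C (freeContra k C B) (range (fInd k C D B π - gInd k C D B θB)) :=
    IsSubContra.range_of_intertwines _ _ freeContraTensor fun Φ => by
      rw [sub_comp, map_sub, freeContra_fInd_comp, freeContra_gInd_comp, LinearMap.sub_apply]
  exact ⟨hsub, hsub.exists_quotient_action⟩

end
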